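/- For the Arnoldi aggregation of size j of (P, p_0) with P row-stochastic, if K^j(p_0,P) is invariant under P and π is any vector with π^T H_j = π^T (a left eigenvector of H_j with eigenvalue 1), then the disaggregated vector μ^T := π^T Q_j satisfies μ^T P = μ^T, i.e., μ is a left eigenvector (stationary vector up to scaling) of P. -/

import Mathlib

open Matrix Finset

/-- Euclidean norm of a row vector. -/
noncomputable def norm2 {n : ℕ} (v : Fin n → ℝ) : ℝ := Real.sqrt (v ⬝ᵥ v)

/-- One Gram–Schmidt projection-subtraction step. -/
noncomputable def gsStep {n : ℕ} (r q : Fin n → ℝ) : Fin n → ℝ := r - (r ⬝ᵥ q) • q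

/-- List `[q_0, …, q_j]` of Arnoldi vectors after `j` expansion steps applied to `(v, M)`. -/
noncomputable def arnoldiList {n : ℕ} (v : Fin n → ℝ) (M : Matrix (Fin n) (Fin n) ℝ) :
    ℕ → List (Fin n → ℝ)
  | 0 => [(norm2 v)⁻¹ • v]
  | j + 1 =>
    let qs := arnoldiList v M j
    let r := qs.foldl gsStep (Matrix.vecMul (qs.getLastD 0) M)
    qs ++ [(norm2 r)⁻¹ • r]

/-- The Arnoldi vector `q_{i+1}` of the paper (0-indexed: `aQ v M i`). -/
noncomputable def aQ {n : ℕ} (v : Fin n → ℝ) (M : Matrix (Fin n) (Fin n) ℝ) (i : ℕ) :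
    Fin n → ℝ :=
  (arnoldiList v M i).getLastD 0

/-- Partial residual `r^{(i)}` in outer step `j` (0-indexed): `q_j M` minus the projections
onto `q_0, …, q_{i-1}`. -/
noncomputable def pres {n : ℕ} (v : Fin n → ℝ) (M : Matrix (Fin n) (Fin n) ℝ) (j i : ℕ) :
    Fin n → ℝ :=
  ((arnoldiList v M j).take i).foldl gsStep (Matrix.vecMul (aQ v M j) M)

/-- The Gram–Schmidt coefficient `h_{j,i}` (0-indexed in both arguments). -/
noncomputable def aH {n : ℕ} (v : Fin n → ℝ) (M : Matrix (Fin n) (Fin n) ℝ) (j i : ℕ) : ℝ :=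
  pres v M j i ⬝ᵥ aQ v M i

/-- The subdiagonal coefficient `h_{j, j+1} = ‖r_{j+1}‖₂` (0-indexed in `j`). -/
noncomputable def hsub {n : ℕ} (v : Fin n → ℝ) (M : Matrix (Fin n) (Fin n) ℝ) (j : ℕ) : ℝ :=
  norm2 (pres v M j (j + 1))

/-- The upper-Hessenberg matrix `H_j` produced by `j` Arnoldi steps. -/
noncomputable def arnoldiHmat {n : ℕ} (v : Fin n → ℝ) (M : Matrix (Fin n) (Fin n) ℝ) (j : ℕ) :
    Matrix (Fin j) (Fin j) ℝ := fun i l =>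
  if (l : ℕ) ≤ (i : ℕ) then aH v M i l
  else if (l : ℕ) = (i : ℕ) + 1 then hsub v M i else 0

/-- The matrix `Q_j` whose rows are the Arnoldi vectors `q_1, …, q_j` of the paper. -/
noncomputable def arnoldiQmat {n : ℕ} (v : Fin n → ℝ) (M : Matrix (Fin n) (Fin n) ℝ) (j : ℕ) :
    Matrix (Fin j) (Fin n) ℝ := fun i => aQ v M i

/-- The Krylov subspace `K^j(v, M) = span{v, vM, …, vM^{j-1}}` (of row vectors). -/
noncomputable def krylov {n : ℕ} (v : Fin n → ℝ) (M : Matrix (Fin n) (Fin n) ℝ) (j : ℕ) :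
    Submodule ℝ (Fin n → ℝ) :=
  Submodule.span ℝ (Set.range fun i : Fin j => Matrix.vecMul v (M ^ (i : ℕ)))

/-!
The rows `q_0, …, q_{j-1}` of `Q_j` satisfy the Arnoldi relation
`q_i P = ∑_{l ≤ i} h_{i,l} q_l + h_{i,i+1} q_{i+1}`, and they are orthonormal because no
breakdown occurs before step `j`. They span a space containing `K^j(p₀, P)`, so under invariance
the last residual `q_{j-1} P - ∑_{l < j} h_{j-1,l} q_l` lies in `K^j` and is orthogonal to all of
it, hence vanishes. Thus `Q_j P = H_j Q_j`, and `π H_j = π` gives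
`(π Q_j) P = π H_j Q_j = π Q_j`.
-/

section Norm

variable {n : ℕ}

lemma norm2_mul_self (w : Fin n → ℝ) : norm2 w * norm2 w = w ⬝ᵥ w :=
  Real.mul_self_sqrt (Finset.sum_nonneg fun i _ => mul_self_nonneg (w i))

lemma norm2_eq_zero {w : Fin n → ℝ} : norm2 w = 0 ↔ w = 0 := by
  rw [← dotProduct_self_eq_zero, ← norm2_mul_self, mul_self_eq_zero]

lemma norm2_smul_inv_norm2_smul (w : Fin n → ℝ) : norm2 w • (norm2 w)⁻¹ • w = w := by
  rcases eq_or_ne (norm2 w) 0 with h | h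
  · rw [norm2_eq_zero.mp h, smul_zero, smul_zero]
  · rw [smul_inv_smul₀ h]

lemma inv_norm2_smul_dotProduct_self {w : Fin n → ℝ} (hw : norm2 w ≠ 0) :
    ((norm2 w)⁻¹ • w) ⬝ᵥ ((norm2 w)⁻¹ • w) = 1 := by
  rw [smul_dotProduct, dotProduct_smul, ← norm2_mul_self, smul_eq_mul, smul_eq_mul]
  field_simp

end Norm

lemma dotProduct_eq_zero_of_mem_span {R ι : Type*} [CommSemiring R] [Fintype ι]
    {s : Set (ι → R)} {r w : ι → R} (hs : ∀ x ∈ s, r ⬝ᵥ x = 0)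
    (hw : w ∈ Submodule.span R s) : r ⬝ᵥ w = 0 := by
  induction hw using Submodule.span_induction with
  | mem x hx => exact hs x hx
  | zero => exact dotProduct_zero r
  | add x y _ _ hx hy => rw [dotProduct_add, hx, hy, add_zero]
  | smul a x _ hx => rw [dotProduct_smul, hx, smul_zero]

section Arnoldi

variable {n : ℕ} (v : Fin n → ℝ) (M : Matrix (Fin n) (Fin n) ℝ)

lemma arnoldiList_length (i : ℕ) : (arnoldiList v M i).length = i + 1 := by
  induction i with
  | zero => simp [arnoldiList]
  | succ i ih => simp [arnoldiList, ih]

lemma arnoldiList_succ (i : ℕ) :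
    arnoldiList v M (i + 1) =
      arnoldiList v M i ++ [(norm2 (pres v M i (i + 1)))⁻¹ • pres v M i (i + 1)] := by
  have htake : (arnoldiList v M i).take (i + 1) = arnoldiList v M i :=
    List.take_of_length_le (arnoldiList_length v M i).le
  show arnoldiList v M i ++ _ = _
  rw [pres, htake, aQ]

lemma aQ_zero : aQ v M 0 = (norm2 v)⁻¹ • v := rfl

lemma aQ_succ (i : ℕ) :
    aQ v M (i + 1) = (norm2 (pres v M i (i + 1)))⁻¹ • pres v M i (i + 1) := by
  rw [aQ, arnoldiList_succ, List.getLastD_concat]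

lemma arnoldiList_eq_map_aQ (i : ℕ) :
    arnoldiList v M i = (List.range (i + 1)).map (aQ v M) := by
  induction i with
  | zero => rfl
  | succ i ih =>
    rw [arnoldiList_succ, ih, ← aQ_succ, List.range_succ (n := i + 1), List.map_append,
      List.map_singleton]

lemma pres_succ {m i : ℕ} (h : i ≤ m) :
    pres v M m (i + 1) = gsStep (pres v M m i) (aQ v M i) := by
  rw [pres, pres, arnoldiList_eq_map_aQ, ← List.map_take, ← List.map_take, List.take_range,
    List.take_range, min_eq_left (by omega), min_eq_left (by omega), List.range_succ,
    List.map_append, List.foldl_append]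
  rfl

lemma pres_eq_sub_sum (m : ℕ) {i : ℕ} (hi : i ≤ m + 1) :
    pres v M m i = vecMul (aQ v M m) M - ∑ l ∈ range i, aH v M m l • aQ v M l := by
  induction i with
  | zero => simp [pres]
  | succ i ih =>
    rw [pres_succ v M (by omega), gsStep, sum_range_succ, aH, ih (by omega)]
    abel

lemma pres_succ_self (m : ℕ) : pres v M m (m + 1) = hsub v M m • aQ v M (m + 1) := by
  rw [aQ_succ, hsub, norm2_smul_inv_norm2_smul]

lemma arnoldi_relation (m : ℕ) :
    vecMul (aQ v M m) M =
      ∑ l ∈ range (m + 1), aH v M m l • aQ v M l + hsub v M m • aQ v M (m + 1) := by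
  rw [← pres_succ_self, pres_eq_sub_sum v M m le_rfl]
  abel

end Arnoldi

section Orthonormality

variable {n : ℕ} {v : Fin n → ℝ} {M : Matrix (Fin n) (Fin n) ℝ}

lemma pres_dotProduct_aQ {m : ℕ}
    (hON : ∀ k ≤ m, ∀ l ≤ m, aQ v M k ⬝ᵥ aQ v M l = if k = l then 1 else 0)
    {i l : ℕ} (hl : l < i) (hi : i ≤ m + 1) : pres v M m i ⬝ᵥ aQ v M l = 0 := by
  induction i with
  | zero => omega
  | succ i ih =>
    rw [pres_succ v M (by omega), gsStep, sub_dotProduct, smul_dotProduct]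
    rcases Nat.lt_succ_iff_lt_or_eq.mp hl with hl | rfl
    · rw [hON i (by omega) l (by omega), if_neg (by omega), ih hl (by omega), smul_zero,
        sub_zero]
    · rw [hON l (by omega) l (by omega), if_pos rfl, smul_eq_mul, mul_one, sub_self]

lemma aQ_dotProduct_aQ (hv : v ≠ 0) {m : ℕ} (hrun : ∀ i < m, hsub v M i ≠ 0) :
    ∀ k ≤ m, ∀ l ≤ m, aQ v M k ⬝ᵥ aQ v M l = if k = l then 1 else 0 := by
  induction m with
  | zero =>
    rintro k hk l hl
    obtain rfl : k = 0 := by omega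
    obtain rfl : l = 0 := by omega
    exact inv_norm2_smul_dotProduct_self (mt norm2_eq_zero.mp hv)
  | succ m ih =>
    have hON := ih fun i hi => hrun i (by omega)
    have hq_orth : ∀ l ≤ m, aQ v M (m + 1) ⬝ᵥ aQ v M l = 0 := fun l hl => by
      rw [aQ_succ, smul_dotProduct, pres_dotProduct_aQ hON (by omega) le_rfl, smul_zero]
    have hq_unit : aQ v M (m + 1) ⬝ᵥ aQ v M (m + 1) = 1 := by
      rw [aQ_succ]
      exact inv_norm2_smul_dotProduct_self (hrun m (by omega))
    rintro k hk l hl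
    rcases Nat.le_succ_iff.mp hk with hk | rfl <;> rcases Nat.le_succ_iff.mp hl with hl | rfl
    · exact hON k hk l hl
    · rw [dotProduct_comm, hq_orth k (by omega), if_neg (by omega)]
    · rw [hq_orth l (by omega), if_neg (by omega)]
    · rw [hq_unit, if_pos rfl]

end Orthonormality

section Krylov

variable {n : ℕ} (v : Fin n → ℝ) (M : Matrix (Fin n) (Fin n) ℝ)

lemma vecMul_mem_krylov_succ {k : ℕ} {w : Fin n → ℝ} (hw : w ∈ krylov v M k) :
    vecMul w M ∈ krylov v M (k + 1) := by
  suffices (krylov v M k).map (vecMulLinear M) ≤ krylov v M (k + 1) from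
    this (Submodule.mem_map_of_mem hw)
  rw [krylov, Submodule.map_span, Submodule.span_le]
  rintro _ ⟨_, ⟨i, rfl⟩, rfl⟩
  refine Submodule.subset_span ⟨i.succ, ?_⟩
  simp [vecMul_vecMul, pow_succ]

lemma aQ_mem_krylov {l k : ℕ} (hl : l < k) : aQ v M l ∈ krylov v M k := by
  induction l using Nat.strong_induction_on generalizing k with
  | _ l ih =>
  rcases l with _ | l
  · rw [aQ_zero]
    refine Submodule.smul_mem _ _ (Submodule.subset_span ⟨⟨0, hl⟩, ?_⟩)
    simp
  · obtain ⟨k, rfl⟩ : ∃ k', k = k' + 1 := ⟨k - 1, by omega⟩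
    rw [aQ_succ, pres_eq_sub_sum v M l le_rfl]
    refine Submodule.smul_mem _ _ (Submodule.sub_mem _ (vecMul_mem_krylov_succ v M
      (ih l (by omega) (by omega))) (Submodule.sum_mem _ fun m hm => Submodule.smul_mem _ _
        (ih m ?_ ?_))) <;>
    · simp only [mem_range] at hm
      omega

lemma vecMul_pow_mem_span_aQ (i : ℕ) :
    vecMul v (M ^ i) ∈ Submodule.span ℝ (aQ v M '' Set.Iic i) := by
  induction i with
  | zero =>
    rw [pow_zero, vecMul_one]
    have hq₀ : aQ v M 0 ∈ Submodule.span ℝ (aQ v M '' Set.Iic 0) :=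
      Submodule.subset_span ⟨0, Set.self_mem_Iic, rfl⟩
    convert Submodule.smul_mem _ (norm2 v) hq₀ using 1
    exact (norm2_smul_inv_norm2_smul v).symm
  | succ i ih =>
    have hmap := Submodule.mem_map_of_mem (f := vecMulLinear M) ih
    rw [Submodule.map_span, vecMulLinear_apply, vecMul_vecMul, ← pow_succ] at hmap
    refine Submodule.span_le.mpr ?_ hmap
    rintro _ ⟨_, ⟨l, hl, rfl⟩, rfl⟩
    have hspan : ∀ m ≤ i + 1, aQ v M m ∈ Submodule.span ℝ (aQ v M '' Set.Iic (i + 1)) :=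
      fun m hm => Submodule.subset_span ⟨m, hm, rfl⟩
    rw [Set.mem_Iic] at hl
    rw [vecMulLinear_apply, arnoldi_relation]
    refine Submodule.add_mem _ (Submodule.sum_mem _ fun m hm => Submodule.smul_mem _ _
      (hspan m ?_)) (Submodule.smul_mem _ _ (hspan _ (by omega)))
    simp only [mem_range] at hm
    omega

lemma krylov_le_span_aQ (k : ℕ) : krylov v M k ≤ Submodule.span ℝ (aQ v M '' Set.Iio k) := by
  rw [krylov, Submodule.span_le]
  rintro _ ⟨i, rfl⟩
  exact Submodule.span_mono (Set.image_mono (Set.Iic_subset_Iio.mpr i.isLt))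
    (vecMul_pow_mem_span_aQ v M i)

end Krylov

section Invariance

variable {n : ℕ} {v : Fin n → ℝ} {M : Matrix (Fin n) (Fin n) ℝ}

lemma hsub_eq_zero_of_krylov_invariant (hv : v ≠ 0) {m : ℕ} (hrun : ∀ i < m, hsub v M i ≠ 0)
    (hinv : ∀ w ∈ krylov v M (m + 1), vecMul w M ∈ krylov v M (m + 1)) : hsub v M m = 0 := by
  have hr_mem : pres v M m (m + 1) ∈ Submodule.span ℝ (aQ v M '' Set.Iio (m + 1)) := by
    refine krylov_le_span_aQ v M (m + 1) ?_
    rw [pres_eq_sub_sum v M m le_rfl]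
    refine Submodule.sub_mem _ (hinv _ (aQ_mem_krylov v M (by omega)))
      (Submodule.sum_mem _ fun l hl => Submodule.smul_mem _ _ (aQ_mem_krylov v M ?_))
    simpa using hl
  have hr_orth : ∀ x ∈ aQ v M '' Set.Iio (m + 1), pres v M m (m + 1) ⬝ᵥ x = 0 := by
    rintro _ ⟨l, hl, rfl⟩
    exact pres_dotProduct_aQ (aQ_dotProduct_aQ hv hrun) hl le_rfl
  exact norm2_eq_zero.mpr
    (dotProduct_self_eq_zero.mp (dotProduct_eq_zero_of_mem_span hr_orth hr_mem))

end Invariance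

section Hessenberg

variable {n : ℕ} {v : Fin n → ℝ} {M : Matrix (Fin n) (Fin n) ℝ}

lemma vecMul_aQ_eq_sum_arnoldiHmat {j : ℕ} (i : Fin j)
    (hlast : (i : ℕ) + 1 = j → hsub v M i = 0) :
    vecMul (aQ v M i) M = ∑ l : Fin j, arnoldiHmat v M j i l • aQ v M l := by
  set g : ℕ → Fin n → ℝ := fun l =>
    (if l ≤ (i : ℕ) then aH v M i l else if l = (i : ℕ) + 1 then hsub v M i else 0) •
      aQ v M l
  have hg_range : ∑ l ∈ range j, g l = ∑ l ∈ range ((i : ℕ) + 2), g l := by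
    rcases (Nat.succ_le_of_lt i.isLt).eq_or_lt with hj | hj
    · rw [show (i : ℕ) + 2 = j + 1 by omega, sum_range_succ, left_eq_add]
      simp [g, ← hj, hlast hj]
    · refine (sum_subset (range_subset_range.mpr hj) fun l hl hl' => ?_).symm
      simp only [mem_range] at hl hl'
      simp [g, show ¬ l ≤ (i : ℕ) by omega, show l ≠ (i : ℕ) + 1 by omega]
  calc vecMul (aQ v M i) M
      = ∑ l ∈ range ((i : ℕ) + 1), aH v M i l • aQ v M l + hsub v M i • aQ v M (i + 1) :=
        arnoldi_relation v M i
    _ = ∑ l ∈ range ((i : ℕ) + 2), g l := by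
        rw [sum_range_succ g]
        congr 1
        · exact sum_congr rfl fun l hl => by simp [g, Nat.lt_succ_iff.mp (mem_range.mp hl)]
        · simp [g]
    _ = ∑ l : Fin j, arnoldiHmat v M j i l • aQ v M l := by
        rw [← hg_range, ← Fin.sum_univ_eq_sum_range g j]
        rfl

lemma arnoldiQmat_mul_eq_arnoldiHmat_mul {j : ℕ} (hlast : ∀ i, i + 1 = j → hsub v M i = 0) :
    arnoldiQmat v M j * M = arnoldiHmat v M j * arnoldiQmat v M j := by
  ext i k
  have hrow := congrFun (vecMul_aQ_eq_sum_arnoldiHmat i (hlast i)) k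
  simpa [Matrix.mul_apply, arnoldiQmat, vecMul, dotProduct, Finset.sum_apply] using hrow

end Hessenberg

theorem arnoldi_stationary_disaggregation_general {n j : ℕ}
    (P : Matrix (Fin n) (Fin n) ℝ)
    (p₀ : Fin n → ℝ) (hp₀ : p₀ ≠ 0)
    (hrun : ∀ i, i + 1 < j → hsub p₀ P i ≠ 0)
    (hinv : ∀ w ∈ krylov p₀ P j, Matrix.vecMul w P ∈ krylov p₀ P j)
    (π : Fin j → ℝ) (heig : Matrix.vecMul π (arnoldiHmat p₀ P j) = π) :
    Matrix.vecMul (Matrix.vecMul π (arnoldiQmat p₀ P j)) P =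
      Matrix.vecMul π (arnoldiQmat p₀ P j) := by
  have hQP : arnoldiQmat p₀ P j * P = arnoldiHmat p₀ P j * arnoldiQmat p₀ P j := by
    refine arnoldiQmat_mul_eq_arnoldiHmat_mul fun m hm => ?_
    subst hm
    exact hsub_eq_zero_of_krylov_invariant hp₀ (fun i hi => hrun i (by omega)) hinv
  rw [vecMul_vecMul, hQP, ← vecMul_vecMul, heig]

/-- under invariance of `K^j(p₀,P)`, any left eigenvector `π` of `H_j` with
eigenvalue `1` disaggregates to a left eigenvector `μ = π Q_j` of `P` with eigenvalue `1`. -/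
theorem arnoldi_stationary_disaggregation {n j : ℕ} (hj : 0 < j)
    (P : Matrix (Fin n) (Fin n) ℝ)
    (hPnn : ∀ i l, 0 ≤ P i l) (hProw : ∀ i, ∑ l, P i l = 1)
    (p₀ : Fin n → ℝ) (hp₀ : p₀ ≠ 0)
    (hrun : ∀ i, i + 1 < j → hsub p₀ P i ≠ 0)
    (hinv : ∀ w ∈ krylov p₀ P j, Matrix.vecMul w P ∈ krylov p₀ P j)
    (π : Fin j → ℝ) (heig : Matrix.vecMul π (arnoldiHmat p₀ P j) = π) :
    Matrix.vecMul (Matrix.vecMul π (arnoldiQmat p₀ P j)) P =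
      Matrix.vecMul π (arnoldiQmat p₀ P j) :=
  arnoldi_stationary_disaggregation_general P p₀ hp₀ hrun hinv π heig
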